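/- arXiv:2301.02375 — 3 statements merged into one kernel-verified Lean document; each statement's English description precedes it below -/
import Mathlib

section
/- Let S be a finite set of states and A a finite set of actions, with discount factor γ ∈ (0,1). Let Q* : S × A → ℝ be the optimal state-action value function satisfying the Bellman optimality equation Q*(s,a) = r(s,a) + γ ∑_{s'} P(s'|s,a) · max_{a'} Q*(s',a'), and let V*(s) = max_a Q*(s,a). Let f : S × A → ℝ be any function and let π_f be a greedy policy with respect to f, i.e., f(s, π_f(s)) = max_a f(s,a) for all s. Let V^{π_f} be the value of π_f, i.e., V^{π_f}(s) = r(s, π_f(s)) + γ ∑_{s'} P(s'|s, π_f(s)) · V^{π_f}(s'). Then ‖V* − V^{π_f}‖_∞ ≤ 2‖f − Q*‖_∞ / (1 − γ). -/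
/-!
Write `ε = ‖f − Q*‖_∞` and `M = ‖V* − V^{π_f}‖_∞`. Since `π_f` maximises `f`, it maximises `Q*`
up to `2ε`, so `0 ≤ V*(s) − Q*(s, π_f s) ≤ 2ε`. Subtracting the two Bellman equations gives
`Q*(s, π_f s) − V^{π_f}(s) = γ · 𝔼_{s' ∼ P(·|s, π_f s)} [V*(s') − V^{π_f}(s')]`, which is at most
`γM` in absolute value. Hence `M ≤ 2ε + γM`, i.e. `M ≤ 2ε / (1 − γ)`.
-/

open Finset

theorem abs_sum_mul_le_of_abs_le {ι : Type*} [Fintype ι] {w x : ι → ℝ} {M : ℝ}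
    (hw : ∀ i, 0 ≤ w i) (hw1 : ∑ i, w i = 1) (hx : ∀ i, |x i| ≤ M) :
    |∑ i, w i * x i| ≤ M :=
  calc |∑ i, w i * x i| ≤ ∑ i, w i * |x i| := by
        refine (abs_sum_le_sum_abs _ _).trans_eq (sum_congr rfl fun i _ => ?_)
        rw [abs_mul, abs_of_nonneg (hw i)]
    _ ≤ ∑ i, w i * M := by gcongr with i _; exacts [hw i, hx i]
    _ = M := by rw [← sum_mul, hw1, one_mul]

theorem ciSup_le_apply_add_two_mul_of_abs_sub_le {A : Type*} [Finite A] {f g : A → ℝ} {a₀ : A} {ε : ℝ}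
    (hgreedy : f a₀ = ⨆ a, f a) (hclose : ∀ a, |f a - g a| ≤ ε) :
    ⨆ a, g a ≤ g a₀ + 2 * ε := by
  have : Nonempty A := ⟨a₀⟩
  refine ciSup_le fun a => ?_
  have hfa : f a ≤ f a₀ := hgreedy ▸ Finite.le_ciSup f a
  have ha := abs_le.mp (hclose a)
  have ha₀ := abs_le.mp (hclose a₀)
  linarith [ha.1, ha₀.2]

theorem performance_gap_general
    {S A : Type*} [Fintype S] [Nonempty S] [Fintype A]
    (P : S → A → S → ℝ) (r : S → A → ℝ) (γ : ℝ)
    (hγ : 0 < γ) (hγ1 : γ < 1)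
    (hPnn : ∀ s a s', 0 ≤ P s a s')
    (hPsum : ∀ s a, ∑ s', P s a s' = 1)
    (Qstar : S → A → ℝ) (Vstar : S → ℝ)
    (hV : ∀ s, Vstar s = ⨆ a, Qstar s a)
    (hBellman : ∀ s a, Qstar s a = r s a + γ * ∑ s', P s a s' * Vstar s')
    (f : S → A → ℝ) (πf : S → A)
    (hgreedy : ∀ s, f s (πf s) = ⨆ a, f s a)
    (Vπ : S → ℝ)
    (hVπ : ∀ s, Vπ s = r s (πf s) + γ * ∑ s', P s (πf s) s' * Vπ s') :
    (⨆ s, |Vstar s - Vπ s|) ≤ 2 * (⨆ p : S × A, |f p.1 p.2 - Qstar p.1 p.2|) / (1 - γ) := by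
  set ε := ⨆ p : S × A, |f p.1 p.2 - Qstar p.1 p.2|
  set M := ⨆ s, |Vstar s - Vπ s|
  have hε : ∀ s a, |f s a - Qstar s a| ≤ ε := fun s a =>
    Finite.le_ciSup (fun p : S × A => |f p.1 p.2 - Qstar p.1 p.2|) (s, a)
  have hM : ∀ s, |Vstar s - Vπ s| ≤ M := Finite.le_ciSup fun s => |Vstar s - Vπ s|
  have hpoint : ∀ s, |Vstar s - Vπ s| ≤ 2 * ε + γ * M := by
    intro s
    have hQ_le_V : Qstar s (πf s) ≤ Vstar s := hV s ▸ Finite.le_ciSup (Qstar s) (πf s)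
    have hV_le_Q : Vstar s ≤ Qstar s (πf s) + 2 * ε :=
      hV s ▸ ciSup_le_apply_add_two_mul_of_abs_sub_le (hgreedy s) (hε s)
    have heval : Qstar s (πf s) - Vπ s = γ * ∑ s', P s (πf s) s' * (Vstar s' - Vπ s') := by
      simp only [hBellman, hVπ s, mul_sub, sum_sub_distrib]
      ring
    have hcontract : |Qstar s (πf s) - Vπ s| ≤ γ * M := by
      rw [heval, abs_mul, abs_of_pos hγ]
      exact mul_le_mul_of_nonneg_left
        (abs_sum_mul_le_of_abs_le (hPnn s (πf s)) (hPsum s (πf s)) hM) hγ.le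
    rw [abs_le] at hcontract ⊢
    constructor <;> linarith [hcontract.1, hcontract.2]
  have hfixed : M ≤ 2 * ε + γ * M := ciSup_le hpoint
  rw [le_div_iff₀ (sub_pos.mpr hγ1)]
  linarith

/-- Performance gap lemma: if `πf` is greedy with respect to `f`, then
`‖V* − V^{π_f}‖_∞ ≤ 2‖f − Q*‖_∞ / (1 − γ)`. -/
theorem performance_gap
    {S A : Type*} [Fintype S] [Nonempty S] [Fintype A] [Nonempty A]
    (P : S → A → S → ℝ) (r : S → A → ℝ) (γ : ℝ)
    (hγ : 0 < γ) (hγ1 : γ < 1)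
    (hPnn : ∀ s a s', 0 ≤ P s a s')
    (hPsum : ∀ s a, ∑ s', P s a s' = 1)
    (Qstar : S → A → ℝ) (Vstar : S → ℝ)
    (hV : ∀ s, Vstar s = ⨆ a, Qstar s a)
    (hBellman : ∀ s a, Qstar s a = r s a + γ * ∑ s', P s a s' * Vstar s')
    (f : S → A → ℝ) (πf : S → A)
    (hgreedy : ∀ s, f s (πf s) = ⨆ a, f s a)
    (Vπ : S → ℝ)
    (hVπ : ∀ s, Vπ s = r s (πf s) + γ * ∑ s', P s (πf s) s' * Vπ s') :
    (⨆ s, |Vstar s - Vπ s|) ≤ 2 * (⨆ p : S × A, |f p.1 p.2 - Qstar p.1 p.2|) / (1 - γ) :=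
  performance_gap_general P r γ hγ hγ1 hPnn hPsum Qstar Vstar hV hBellman f πf hgreedy Vπ hVπ
end

section
/- Let (X_a)_{a∈A} be a finite nonempty family of i.i.d. real random variables with common distribution having mean μ, and suppose the variables are not almost surely constant and |A| ≥ 2. If each X_a is integrable and max is integrable, then E[max_{a∈A} X_a] > μ; i.e., the overestimation bias of the max of at least two i.i.d. non-degenerate unbiased estimators is strictly positive. -/
/-!
Pick `a ≠ b`. Since `max x y = (x + y + |x - y|) / 2`, the maximum over all of `A` has
expectation at least `m + 𝔼|X a - X b| / 2`, so it suffices that `X a` and `X b` are not a.e.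
equal. If they were, `X a` would be independent of itself; then every event `{X a ∈ U}` is
independent of its complement, so one of the two is null, and `X a` is a.e. constant.
-/

open MeasureTheory ProbabilityTheory

namespace ProbabilityTheory

variable {Ω β : Type*} {_mΩ : MeasurableSpace Ω} {μ : Measure Ω}
  [MeasurableSpace β] [Nonempty β] [MeasurableSpace.CountablySeparated β]

theorem IndepFun.exists_ae_eq_const_of_self {Y : Ω → β} (hY : IndepFun Y Y μ) :
    ∃ c, Y =ᵐ[μ] fun _ => c := by
  refine Filter.exists_eventuallyEq_const_of_forall_separating MeasurableSet fun U hU => ?_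
  have hprod := hY.measure_inter_preimage_eq_mul U Uᶜ hU hU.compl
  rw [Set.preimage_compl, Set.inter_compl_self, measure_empty, eq_comm, mul_eq_zero] at hprod
  rcases hprod with hU0 | hUc0
  · exact Or.inr (measure_eq_zero_iff_ae_notMem.1 hU0)
  · exact Or.inl ((measure_eq_zero_iff_ae_notMem.1 hUc0).mono fun _ h => not_not.1 h)

theorem IndepFun.exists_ae_eq_const_of_ae_eq {X Y : Ω → β} (hXY : IndepFun X Y μ)
    (h : X =ᵐ[μ] Y) : ∃ c, X =ᵐ[μ] fun _ => c :=
  (hXY.congr Filter.EventuallyEq.rfl h.symm).exists_ae_eq_const_of_self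

end ProbabilityTheory

namespace MeasureTheory

variable {Ω : Type*} {_mΩ : MeasurableSpace Ω} {μ : Measure Ω}

theorem integral_max_eq {f g : Ω → ℝ} (hf : Integrable f μ) (hg : Integrable g μ) :
    ∫ ω, max (f ω) (g ω) ∂μ = (∫ ω, f ω ∂μ + ∫ ω, g ω ∂μ + ∫ ω, |f ω - g ω| ∂μ) / 2 := by
  have hmax : ∀ ω, max (f ω) (g ω) = (f ω + g ω + |f ω - g ω|) / 2 := fun ω => by
    linarith [min_add_max (f ω) (g ω), max_sub_min_eq_abs' (f ω) (g ω)]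
  simp_rw [hmax]
  rw [integral_div, integral_add (f := fun ω => f ω + g ω) (g := fun ω => |f ω - g ω|)
    (hf.add hg) (hf.sub hg).abs, integral_add hf hg]

theorem integral_add_integral_div_two_lt_integral_max {f g : Ω → ℝ} (hf : Integrable f μ)
    (hg : Integrable g μ) (hfg : ¬ f =ᵐ[μ] g) :
    (∫ ω, f ω ∂μ + ∫ ω, g ω ∂μ) / 2 < ∫ ω, max (f ω) (g ω) ∂μ := by
  have hpos : 0 < ∫ ω, |f ω - g ω| ∂μ := by
    refine (integral_nonneg fun ω => abs_nonneg _).lt_of_ne' fun h0 => hfg ?_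
    filter_upwards [(integral_eq_zero_iff_of_nonneg (fun ω => abs_nonneg _) (hf.sub hg).abs).1 h0]
      with ω hω
    simpa [sub_eq_zero] using hω
  rw [integral_max_eq hf hg]
  linarith

end MeasureTheory

theorem strict_overestimation_bias_general
    {Ω : Type*} [MeasurableSpace Ω] (μ : Measure Ω)
    {A : Type*} [Fintype A] (hA : 2 ≤ Fintype.card A)
    (X : A → Ω → ℝ) (m : ℝ)
    (hInt : ∀ a, Integrable (X a) μ)
    (hIntMax : Integrable (fun ω => ⨆ a, X a ω) μ)
    (hmean : ∀ a, ∫ ω, X a ω ∂μ = m)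
    (hindep : iIndepFun X μ)
    (hnondeg : ∀ a, ¬ ∃ c : ℝ, X a =ᵐ[μ] fun _ => c) :
    m < ∫ ω, ⨆ a, X a ω ∂μ := by
  obtain ⟨a, b, hab⟩ := Fintype.exists_pair_of_one_lt_card hA
  have hne : ¬ X a =ᵐ[μ] X b := fun h =>
    hnondeg a ((hindep.indepFun hab).exists_ae_eq_const_of_ae_eq h)
  have hmax_le : ∀ ω, max (X a ω) (X b ω) ≤ ⨆ c, X c ω := fun ω =>
    have hbdd : BddAbove (Set.range fun c => X c ω) := (Set.finite_range _).bddAbove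
    max_le (le_ciSup hbdd a) (le_ciSup hbdd b)
  calc m = (∫ ω, X a ω ∂μ + ∫ ω, X b ω ∂μ) / 2 := by rw [hmean, hmean]; ring
    _ < ∫ ω, max (X a ω) (X b ω) ∂μ :=
      integral_add_integral_div_two_lt_integral_max (hInt a) (hInt b) hne
    _ ≤ ∫ ω, ⨆ c, X c ω ∂μ := integral_mono ((hInt a).sup (hInt b)) hIntMax hmax_le

/-- Strict overestimation bias: the expectation of the max of at least two i.i.d.
integrable, non-degenerate, unbiased estimators strictly exceeds the common mean. -/
theorem strict_overestimation_bias
    {Ω : Type*} [MeasurableSpace Ω] (μ : Measure Ω) [IsProbabilityMeasure μ]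
    {A : Type*} [Fintype A] (hA : 2 ≤ Fintype.card A)
    (X : A → Ω → ℝ) (m : ℝ)
    (hInt : ∀ a, Integrable (X a) μ)
    (hIntMax : Integrable (fun ω => ⨆ a, X a ω) μ)
    (hmean : ∀ a, ∫ ω, X a ω ∂μ = m)
    (hident : ∀ a b, IdentDistrib (X a) (X b) μ μ)
    (hindep : iIndepFun X μ)
    (hnondeg : ∀ a, ¬ ∃ c : ℝ, X a =ᵐ[μ] fun _ => c) :
    m < ∫ ω, ⨆ a, X a ω ∂μ :=
  strict_overestimation_bias_general μ hA X m hInt hIntMax hmean hindep hnondeg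
end

section
/- In the performance-gap setting, the bound is tight up to a factor: there exists a finite MDP with γ ∈ (0,1), an approximate value function f with ‖f − Q*‖_∞ = ε > 0, and a greedy policy π_f with respect to f such that ‖V* − V^{π_f}‖_∞ ≥ 2γε/(1−γ). (Construction: two actions at a single decision state, one leading to a self-loop of reward per step differing by an amount on the order of ε, with f swapping the action ranking.) -/
/-!
Take one decision state whose two actions both keep the state unchanged: action `0` earns
`2ε` per step, action `1` earns nothing. Then `Q*` is `2ε/(1-γ)` for action `0` and
`2γε/(1-γ)` for action `1`, a gap of exactly `2ε`. The midpoint `f` of the two values is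
`ε`-accurate yet ties the actions, so the greedy policy may choose action `1` forever and
lose the whole value `2ε/(1-γ) ≥ 2γε/(1-γ)`. A second, inert state fills out the MDP.
-/

def stayKernel {S A : Type*} [DecidableEq S] (s : S) (_ : A) (s' : S) : ℝ :=
  if s' = s then 1 else 0

lemma stayKernel_nonneg {S A : Type*} [DecidableEq S] (s : S) (a : A) (s' : S) :
    0 ≤ stayKernel s a s' := by
  unfold stayKernel; split_ifs <;> norm_num

lemma sum_stayKernel {S A : Type*} [Fintype S] [DecidableEq S] (s : S) (a : A) :
    ∑ s', stayKernel s a s' = 1 := by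
  simp [stayKernel]

lemma sum_stayKernel_mul {S A : Type*} [Fintype S] [DecidableEq S] (s : S) (a : A)
    (V : S → ℝ) : ∑ s', stayKernel s a s' * V s' = V s := by
  simp [stayKernel]

lemma ciSup_eq_of_forall_le {ι α : Type*} [Finite ι] [ConditionallyCompleteLattice α] {g : ι → α} {i₀ : ι}
    (h : ∀ i, g i ≤ g i₀) : ⨆ i, g i = g i₀ :=
  have : Nonempty ι := ⟨i₀⟩
  le_antisymm (ciSup_le h) (le_ciSup (Finite.bddAbove_range g) i₀)

noncomputable section

namespace StayExample

variable (γ ε : ℝ)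

def reward (s a : Fin 2) : ℝ := if s = 0 ∧ a = 0 then 2 * ε else 0

def optValue (s : Fin 2) : ℝ := if s = 0 then 2 * ε / (1 - γ) else 0

def optQ (s a : Fin 2) : ℝ := reward ε s a + γ * optValue γ ε s

def approxQ (s _ : Fin 2) : ℝ := (optQ γ ε s 0 + optQ γ ε s 1) / 2

variable {γ ε}

lemma optValue_nonneg (hγ : γ < 1) (hε : 0 ≤ ε) (s : Fin 2) : 0 ≤ optValue γ ε s := by
  unfold optValue; split_ifs
  · exact div_nonneg (by linarith) (by linarith)
  · rfl

lemma optQ_zero (hγ : γ ≠ 1) (s : Fin 2) : optQ γ ε s 0 = optValue γ ε s := by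
  have : 1 - γ ≠ 0 := sub_ne_zero.mpr hγ.symm
  fin_cases s
  · simp only [optQ, reward, optValue, Fin.zero_eta, and_self, if_true]
    field_simp
    ring
  · simp [optQ, reward, optValue]

lemma optQ_one (s : Fin 2) : optQ γ ε s 1 = γ * optValue γ ε s := by
  simp [optQ, reward]

lemma optQ_sub_optQ (hγ : γ ≠ 1) (s : Fin 2) :
    optQ γ ε s 0 - optQ γ ε s 1 = if s = 0 then 2 * ε else 0 := by
  have : 1 - γ ≠ 0 := sub_ne_zero.mpr hγ.symm
  rw [optQ_zero hγ, optQ_one, ← one_sub_mul, optValue]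
  split_ifs
  · field_simp
  · simp

lemma optValue_eq_iSup_optQ (hγ : γ < 1) (hε : 0 ≤ ε) (s : Fin 2) :
    optValue γ ε s = ⨆ a, optQ γ ε s a := by
  have hmax : ∀ a, optQ γ ε s a ≤ optQ γ ε s 0 := by
    have hV := optValue_nonneg hγ hε s
    intro a
    fin_cases a
    · rfl
    · simp only [Fin.mk_one, optQ_one, optQ_zero hγ.ne]
      nlinarith
  rw [ciSup_eq_of_forall_le hmax, optQ_zero hγ.ne]

lemma abs_approxQ_sub_optQ (hγ : γ ≠ 1) (hε : 0 ≤ ε) (s a : Fin 2) :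
    |approxQ γ ε s a - optQ γ ε s a| = if s = 0 then ε else 0 := by
  have hhalf : |approxQ γ ε s a - optQ γ ε s a| = |optQ γ ε s 0 - optQ γ ε s 1| / 2 := by
    unfold approxQ
    fin_cases a
    · rw [← abs_neg, ← abs_two, ← abs_div, Fin.zero_eta]; congr 1; ring
    · rw [← abs_two, ← abs_div, Fin.mk_one]; congr 1; ring
  rw [hhalf, optQ_sub_optQ hγ]
  split_ifs
  · rw [abs_of_nonneg (by linarith)]; ring
  · simp

lemma iSup_abs_approxQ_sub_optQ (hγ : γ ≠ 1) (hε : 0 ≤ ε) :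
    (⨆ p : Fin 2 × Fin 2, |approxQ γ ε p.1 p.2 - optQ γ ε p.1 p.2|) = ε := by
  have hmax : ∀ p : Fin 2 × Fin 2,
      |approxQ γ ε p.1 p.2 - optQ γ ε p.1 p.2| ≤ |approxQ γ ε 0 0 - optQ γ ε 0 0| := by
    intro p
    rw [abs_approxQ_sub_optQ hγ hε, abs_approxQ_sub_optQ hγ hε, if_pos rfl]
    split_ifs <;> simp [hε]
  rw [ciSup_eq_of_forall_le (i₀ := (0, 0)) hmax, abs_approxQ_sub_optQ hγ hε, if_pos rfl]

lemma approxQ_eq_iSup (s a : Fin 2) : approxQ γ ε s a = ⨆ b, approxQ γ ε s b :=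
  (ciSup_const).symm

lemma le_iSup_abs_optValue (hγ : γ < 1) (hε : 0 ≤ ε) :
    2 * γ * ε / (1 - γ) ≤ ⨆ s, |optValue γ ε s - 0| := by
  refine le_ciSup_of_le (Finite.bddAbove_range _) 0 ?_
  rw [sub_zero, abs_of_nonneg (optValue_nonneg hγ hε 0), optValue, if_pos rfl]
  gcongr ?_ / _
  nlinarith

end StayExample

end

open StayExample in
/-- Near-tightness of the performance gap bound: there is a finite MDP, an approximate
value function `f` with `‖f − Q*‖_∞ = ε > 0`, and a greedy policy `π_f` w.r.t. `f`
whose performance gap is at least `2γε/(1−γ)`. -/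
theorem performance_gap_near_tight :
    ∃ (n m : ℕ) (_ : 0 < n) (_ : 0 < m)
      (P : Fin (n + 1) → Fin (m + 1) → Fin (n + 1) → ℝ)
      (r : Fin (n + 1) → Fin (m + 1) → ℝ) (γ ε : ℝ)
      (Qstar f : Fin (n + 1) → Fin (m + 1) → ℝ)
      (Vstar Vπ : Fin (n + 1) → ℝ) (πf : Fin (n + 1) → Fin (m + 1)),
      0 < γ ∧ γ < 1 ∧ 0 < ε ∧
      (∀ s a s', 0 ≤ P s a s') ∧
      (∀ s a, ∑ s', P s a s' = 1) ∧
      (∀ s, Vstar s = ⨆ a, Qstar s a) ∧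
      (∀ s a, Qstar s a = r s a + γ * ∑ s', P s a s' * Vstar s') ∧
      (∀ s, f s (πf s) = ⨆ a, f s a) ∧
      (∀ s, Vπ s = r s (πf s) + γ * ∑ s', P s (πf s) s' * Vπ s') ∧
      (⨆ p : Fin (n + 1) × Fin (m + 1), |f p.1 p.2 - Qstar p.1 p.2|) = ε ∧
      2 * γ * ε / (1 - γ) ≤ ⨆ s, |Vstar s - Vπ s| := by
  have hγ : (1 / 2 : ℝ) < 1 := by norm_num
  refine ⟨1, 1, one_pos, one_pos, stayKernel, reward 1, 1 / 2, 1, optQ (1 / 2) 1,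
    approxQ (1 / 2) 1, optValue (1 / 2) 1, 0, fun _ => 1, by norm_num, hγ, one_pos,
    stayKernel_nonneg, sum_stayKernel, optValue_eq_iSup_optQ hγ zero_le_one,
    fun s a => by rw [sum_stayKernel_mul]; rfl, fun s => approxQ_eq_iSup s 1,
    fun s => by simp [reward], iSup_abs_approxQ_sub_optQ hγ.ne zero_le_one,
    le_iSup_abs_optValue hγ zero_le_one⟩
end
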